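/- Let D ≥ 1, ℏ > 0, and α ∈ ℝ^D × ℝ^D. Then (2πℏ)^{−D} ∫_{ℝ^D × ℝ^D} |⟨φ_α, φ_β⟩_{L²(ℝ^D)}| dβ = 2^D. -/

import Mathlib

/-- The normalized coherent state
`φ_α(x) = (πℏ)^{-D/4} exp(i α_p ⋅ (x − α_x/2)/ℏ) exp(−|x − α_x|²/(2ℏ))`. -/
noncomputable def coherent (D : ℕ) (ℏ : ℝ)
    (α : EuclideanSpace ℝ (Fin D) × EuclideanSpace ℝ (Fin D))
    (x : EuclideanSpace ℝ (Fin D)) : ℂ :=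
  (((Real.pi * ℏ) ^ (-(D : ℝ) / 4) : ℝ) : ℂ) *
    Complex.exp (Complex.I * (((inner ℝ α.2 (x - (2:ℝ)⁻¹ • α.1) : ℝ) / ℏ : ℝ) : ℂ)) *
    Complex.exp (-((‖x - α.1‖ ^ 2 / (2 * ℏ) : ℝ) : ℂ))

/-!
Completing the square about the midpoint `(α_x + β_x)/2` turns `conj φ_α · φ_β` into a constant of
modulus `(πℏ)^{-D/2} e^{-|β_x - α_x|²/4ℏ}` times the Gaussian `e^{-|v|²/ℏ}` with linear phase
`⟨β_p - α_p, v⟩/ℏ`. The Fourier transform of that Gaussian gives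
`|⟨φ_α, φ_β⟩| = e^{-|β_x - α_x|²/4ℏ} e^{-|β_p - α_p|²/4ℏ}`, whose integral over phase space is
`(4πℏ)^D = 2^D (2πℏ)^D`.
-/

open MeasureTheory Complex
open scoped Real InnerProductSpace ComplexConjugate

section Midpoint

variable {E : Type*} [NormedAddCommGroup E] [InnerProductSpace ℝ E]

lemma norm_add_midpoint_sub_sq_add_norm_add_midpoint_sub_sq (v a b : E) :
    ‖v + (2:ℝ)⁻¹ • (a + b) - a‖ ^ 2 + ‖v + (2:ℝ)⁻¹ • (a + b) - b‖ ^ 2 =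
      2 * ‖v‖ ^ 2 + ‖b - a‖ ^ 2 / 2 := by
  have ha : v + (2:ℝ)⁻¹ • (a + b) - a = v + (2:ℝ)⁻¹ • (b - a) := by module
  have hb : v + (2:ℝ)⁻¹ • (a + b) - b = v - (2:ℝ)⁻¹ • (b - a) := by module
  have := parallelogram_law_with_norm ℝ v ((2:ℝ)⁻¹ • (b - a))
  rw [ha, hb, norm_smul, Real.norm_of_nonneg (by norm_num)] at *
  linear_combination this

lemma inner_add_midpoint_sub_half_sub_inner (v a b p q : E) :
    ⟪q, v + (2:ℝ)⁻¹ • (a + b) - (2:ℝ)⁻¹ • b⟫_ℝ - ⟪p, v + (2:ℝ)⁻¹ • (a + b) - (2:ℝ)⁻¹ • a⟫_ℝ =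
      ⟪q - p, v⟫_ℝ + (⟪q, a⟫_ℝ - ⟪p, b⟫_ℝ) / 2 := by
  have ha : v + (2:ℝ)⁻¹ • (a + b) - (2:ℝ)⁻¹ • b = v + (2:ℝ)⁻¹ • a := by module
  have hb : v + (2:ℝ)⁻¹ • (a + b) - (2:ℝ)⁻¹ • a = v + (2:ℝ)⁻¹ • b := by module
  rw [ha, hb, inner_add_right, inner_add_right, inner_smul_right, inner_smul_right,
    inner_sub_left]
  ring

end Midpoint

section Gaussian

variable {V : Type*} [NormedAddCommGroup V] [InnerProductSpace ℝ V] [FiniteDimensional ℝ V]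
  [MeasurableSpace V] [BorelSpace V]

lemma integral_exp_neg_norm_sub_sq_div (c : V) {s : ℝ} (hs : 0 < s) :
    ∫ a : V, Real.exp (-(‖a - c‖ ^ 2 / s)) = (π * s) ^ (Module.finrank ℝ V / 2 : ℝ) := by
  calc ∫ a : V, Real.exp (-(‖a - c‖ ^ 2 / s)) = ∫ a : V, Real.exp (-s⁻¹ * ‖a‖ ^ 2) := by
        rw [integral_sub_right_eq_self (fun a ↦ Real.exp (-(‖a‖ ^ 2 / s))) c]
        simp only [div_eq_inv_mul, neg_mul]
    _ = (π * s) ^ (Module.finrank ℝ V / 2 : ℝ) := by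
        rw [GaussianFourier.integral_rexp_neg_mul_sq_norm (inv_pos.2 hs), div_inv_eq_mul]

lemma norm_integral_cexp_neg_mul_sq_norm_add_mul_I_mul_inner {b : ℝ} (hb : 0 < b) (t : ℝ)
    (w : V) :
    ‖∫ v : V, cexp (-(b : ℂ) * ‖v‖ ^ 2 + (t * I) * ⟪w, v⟫_ℝ)‖ =
      (π / b) ^ (Module.finrank ℝ V / 2 : ℝ) * Real.exp (-(t ^ 2 * ‖w‖ ^ 2 / (4 * b))) := by
  rw [GaussianFourier.integral_cexp_neg_mul_sq_norm_add (by simpa using hb), norm_mul,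
    norm_exp, ← ofReal_div, norm_cpow_eq_rpow_re_of_pos (by positivity)]
  congr 2
  · simp
  · rw [mul_pow, I_sq, ← ofReal_re (-(t ^ 2 * ‖w‖ ^ 2 / (4 * b)))]
    push_cast
    ring_nf

end Gaussian

section Coherent

variable {D : ℕ} {ℏ : ℝ}

lemma conj_coherent_mul_coherent (hℏ : 0 < ℏ)
    (α β : EuclideanSpace ℝ (Fin D) × EuclideanSpace ℝ (Fin D)) (x : EuclideanSpace ℝ (Fin D)) :
    conj (coherent D ℏ α x) * coherent D ℏ β x =
      ((π * ℏ) ^ (-(D : ℝ) / 2) : ℝ) *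
        cexp ((((⟪β.2, x - (2:ℝ)⁻¹ • β.1⟫_ℝ - ⟪α.2, x - (2:ℝ)⁻¹ • α.1⟫_ℝ) / ℏ : ℝ) : ℂ) * I -
          (((‖x - α.1‖ ^ 2 + ‖x - β.1‖ ^ 2) / (2 * ℏ) : ℝ) : ℂ)) := by
  have hsq : (π * ℏ) ^ (-(D : ℝ) / 2) = (π * ℏ) ^ (-(D : ℝ) / 4) * (π * ℏ) ^ (-(D : ℝ) / 4) := by
    rw [← Real.rpow_add (by positivity)]
    ring_nf
  simp only [coherent, map_mul, conj_ofReal, ← exp_conj, map_neg, conj_I]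
  rw [hsq, ofReal_mul, mul_mul_mul_comm, mul_mul_mul_comm (((π * ℏ) ^ (-(D : ℝ) / 4) : ℝ) : ℂ),
    mul_assoc, ← exp_add, ← exp_add, ← exp_add]
  congr 2
  push_cast
  ring

lemma conj_coherent_mul_coherent_add_midpoint (hℏ : 0 < ℏ)
    (α β : EuclideanSpace ℝ (Fin D) × EuclideanSpace ℝ (Fin D)) (v : EuclideanSpace ℝ (Fin D)) :
    conj (coherent D ℏ α (v + (2:ℝ)⁻¹ • (α.1 + β.1))) *
        coherent D ℏ β (v + (2:ℝ)⁻¹ • (α.1 + β.1)) =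
      ((π * ℏ) ^ (-(D : ℝ) / 2) * Real.exp (-(‖β.1 - α.1‖ ^ 2 / (4 * ℏ))) : ℝ) *
        cexp ((((⟪β.2, α.1⟫_ℝ - ⟪α.2, β.1⟫_ℝ) / (2 * ℏ) : ℝ) : ℂ) * I) *
        cexp (-((ℏ⁻¹ : ℝ) : ℂ) * ‖v‖ ^ 2 + (((ℏ⁻¹ : ℝ) : ℂ) * I) * ⟪β.2 - α.2, v⟫_ℝ) := by
  rw [conj_coherent_mul_coherent hℏ, inner_add_midpoint_sub_half_sub_inner,
    norm_add_midpoint_sub_sq_add_norm_add_midpoint_sub_sq, ofReal_mul, ofReal_exp, mul_assoc,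
    mul_assoc, ← exp_add, ← exp_add]
  congr 2
  push_cast
  field_simp
  ring

lemma norm_integral_conj_coherent_mul_coherent (hℏ : 0 < ℏ)
    (α β : EuclideanSpace ℝ (Fin D) × EuclideanSpace ℝ (Fin D)) :
    ‖∫ x, conj (coherent D ℏ α x) * coherent D ℏ β x‖ =
      Real.exp (-(‖β.1 - α.1‖ ^ 2 / (4 * ℏ))) * Real.exp (-(‖β.2 - α.2‖ ^ 2 / (4 * ℏ))) := by
  rw [← integral_add_right_eq_self _ ((2:ℝ)⁻¹ • (α.1 + β.1))]
  simp_rw [conj_coherent_mul_coherent_add_midpoint hℏ]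
  rw [integral_const_mul, norm_mul, norm_mul, norm_exp_ofReal_mul_I, norm_real,
    norm_integral_cexp_neg_mul_sq_norm_add_mul_I_mul_inner (inv_pos.2 hℏ),
    finrank_euclideanSpace_fin, Real.norm_of_nonneg (by positivity), mul_one, div_inv_eq_mul,
    show ℏ⁻¹ ^ 2 * ‖β.2 - α.2‖ ^ 2 / (4 * ℏ⁻¹) = ‖β.2 - α.2‖ ^ 2 / (4 * ℏ) by field_simp]
  have hcancel : (π * ℏ) ^ (-(D : ℝ) / 2) * (π * ℏ) ^ ((D : ℝ) / 2) = 1 := by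
    rw [← Real.rpow_add (by positivity), neg_div, neg_add_cancel, Real.rpow_zero]
  linear_combination (Real.exp (-(‖β.1 - α.1‖ ^ 2 / (4 * ℏ))) *
    Real.exp (-(‖β.2 - α.2‖ ^ 2 / (4 * ℏ)))) * hcancel

lemma integral_norm_integral_conj_coherent_mul_coherent (hℏ : 0 < ℏ)
    (α : EuclideanSpace ℝ (Fin D) × EuclideanSpace ℝ (Fin D)) :
    ∫ β, ‖∫ x, conj (coherent D ℏ α x) * coherent D ℏ β x‖ = (4 * π * ℏ) ^ (D : ℝ) := by
  simp_rw [norm_integral_conj_coherent_mul_coherent hℏ]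
  rw [Measure.volume_eq_prod, integral_prod_mul (fun a ↦ Real.exp (-(‖a - α.1‖ ^ 2 / (4 * ℏ))))
      (fun a ↦ Real.exp (-(‖a - α.2‖ ^ 2 / (4 * ℏ)))),
    integral_exp_neg_norm_sub_sq_div _ (by positivity),
    integral_exp_neg_norm_sub_sq_div _ (by positivity), finrank_euclideanSpace_fin,
    ← Real.rpow_add (by positivity), add_halves, mul_left_comm, mul_assoc]

end Coherent

theorem coherent_overlap_integral_general (D : ℕ) (ℏ : ℝ) (hℏ : 0 < ℏ)
    (α : EuclideanSpace ℝ (Fin D) × EuclideanSpace ℝ (Fin D)) :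
    (2 * Real.pi * ℏ) ^ (-(D : ℝ)) *
        ∫ β : EuclideanSpace ℝ (Fin D) × EuclideanSpace ℝ (Fin D),
          ‖∫ x : EuclideanSpace ℝ (Fin D),
            (starRingEnd ℂ) (coherent D ℏ α x) * coherent D ℏ β x‖
      = 2 ^ D := by
  rw [integral_norm_integral_conj_coherent_mul_coherent hℏ,
    show 4 * π * ℏ = 2 * (2 * π * ℏ) by ring, Real.mul_rpow zero_le_two (by positivity),
    Real.rpow_natCast, Real.rpow_neg (by positivity)]
  field_simp

/-- `(2πℏ)^{-D} ∫ |⟨φ_α, φ_β⟩| dβ = 2^D`. -/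
theorem coherent_overlap_integral (D : ℕ) (hD : 1 ≤ D) (ℏ : ℝ) (hℏ : 0 < ℏ)
    (α : EuclideanSpace ℝ (Fin D) × EuclideanSpace ℝ (Fin D)) :
    (2 * Real.pi * ℏ) ^ (-(D : ℝ)) *
        ∫ β : EuclideanSpace ℝ (Fin D) × EuclideanSpace ℝ (Fin D),
          ‖∫ x : EuclideanSpace ℝ (Fin D),
            (starRingEnd ℂ) (coherent D ℏ α x) * coherent D ℏ β x‖
      = 2 ^ D :=
  coherent_overlap_integral_general D ℏ hℏ α
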